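/- Let ε > 0, γ > 0, and let n0 : ℝ² → (0,∞), n⃗ : ℝ² → ℝ³ and J⃗ = (J1, J2, 0) : ℝ² → ℝ³ be smooth with 0 < |n⃗(r)| < n0(r) for all r. Set u⃗ = J⃗/n0, p⃗ = (p1,p2,0), ω = 1 / log√( (n0+|n⃗|)/(n0−|n⃗|) ), and Z(r,p) = [ (1 − |n⃗|²/n0²)·(n⃗⊗n⃗/|n⃗|²) + ω·(|n⃗|/n0)·( I₃ − n⃗⊗n⃗/|n⃗|² ) ]·(p⃗ − u⃗) + (ω/(2γ))·(1 − |n⃗|/n0)·( n⃗/|n⃗| ) ∧ [ ((p⃗ − u⃗)·∇⃗)(n⃗/|n⃗|) ], where ∇⃗ = (∂_{r_1}, ∂_{r_2}, 0). Define g0(r,p) = (n0(r)/(2π))·e^{−|p⃗−u⃗(r)|²/2} and g⃗(r,p) = (n0(r)/(2π))·e^{−|p⃗−u⃗(r)|²/2}·( n⃗(r)/n0(r) − εγ·Z(r,p) ). Then for every r ∈ ℝ²: ∫_{ℝ²} g0(r,p) dp = n0(r), ∫_{ℝ²} p⃗·g0(r,p) dp = J⃗(r), and ∫_{ℝ²}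 g⃗(r,p) dp = n⃗(r). -/

import Mathlib

open MeasureTheory

noncomputable section

/-- Cross product on `ℝ³`. -/
def cross3 (u v : Fin 3 → ℝ) : Fin 3 → ℝ :=
  ![u 1 * v 2 - u 2 * v 1, u 2 * v 0 - u 0 * v 2, u 0 * v 1 - u 1 * v 0]


open Real in
lemma int_exp1 (a : ℝ) : Integrable (fun x : ℝ => Real.exp (-(x - a)^2/2)) := by
  have h := (integrable_exp_neg_mul_sq (b := (1:ℝ)/2) (by norm_num)).comp_sub_right a
  have e : (fun x : ℝ => Real.exp (-(x - a)^2/2))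
      = fun x : ℝ => Real.exp (-((1:ℝ)/2) * (x - a)^2) := funext fun x => by ring_nf
  rw [e]; exact h

open Real in
lemma int_mexp1 (a : ℝ) : Integrable (fun x : ℝ => (x - a) * Real.exp (-(x - a)^2/2)) := by
  have h := (integrable_mul_exp_neg_mul_sq (b := (1:ℝ)/2) (by norm_num)).comp_sub_right a
  have e : (fun x : ℝ => (x - a) * Real.exp (-(x - a)^2/2))
      = fun x : ℝ => (x - a) * Real.exp (-((1:ℝ)/2) * (x - a)^2) := funext fun x => by ring_nf
  rw [e]; exact h

open Real in
lemma ig1 (a : ℝ) : ∫ x : ℝ, Real.exp (-(x - a)^2/2) = Real.sqrt (2*π) := by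
  have h : ∫ x : ℝ, Real.exp (-(x - a)^2/2) = ∫ x : ℝ, Real.exp (-x^2/2) :=
    integral_sub_right_eq_self (fun y => Real.exp (-y^2/2)) a
  rw [h]
  rw [show (fun x : ℝ => Real.exp (-x^2/2)) = fun x : ℝ => Real.exp (-((1:ℝ)/2) * x^2) from
    funext fun x => by ring_nf]
  rw [integral_gaussian]
  rw [show π / ((1:ℝ)/2) = 2 * π by ring]

open Real in
lemma ig2 (a : ℝ) : ∫ x : ℝ, (x - a) * Real.exp (-(x - a)^2/2) = 0 := by
  have h : ∫ x : ℝ, (x - a) * Real.exp (-(x - a)^2/2)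
      = ∫ x : ℝ, x * Real.exp (-x^2/2) :=
    integral_sub_right_eq_self (fun y => y * Real.exp (-y^2/2)) a
  rw [h]
  have h2 : ∫ x : ℝ, x * Real.exp (-x^2/2) = - ∫ x : ℝ, x * Real.exp (-x^2/2) := by
    conv_lhs => rw [← integral_neg_eq_self (fun x : ℝ => x * Real.exp (-x^2/2))]
    rw [← integral_neg]
    congr 1; funext x; simp only [neg_sq, neg_mul]
  linarith

open Real in
lemma gauss2d (a b c0 c1 c2 : ℝ) :
    ∫ p : Fin 2 → ℝ, Real.exp (-((p 0 - a)^2 + (p 1 - b)^2)/2) *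
      (c0 + c1 * (p 0 - a) + c2 * (p 1 - b)) = 2 * π * c0 := by
  have key : ∫ q : ℝ × ℝ, Real.exp (-((q.1 - a)^2 + (q.2 - b)^2)/2) *
      (c0 + c1 * (q.1 - a) + c2 * (q.2 - b)) = 2 * π * c0 := by
    have hsplit : ∀ q : ℝ × ℝ, Real.exp (-((q.1 - a)^2 + (q.2 - b)^2)/2) *
        (c0 + c1 * (q.1 - a) + c2 * (q.2 - b))
        = c0 * ((fun x => Real.exp (-(x - a)^2/2)) q.1 * (fun y => Real.exp (-(y - b)^2/2)) q.2)
        + (c1 * ((fun x => (x - a) * Real.exp (-(x - a)^2/2)) q.1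
            * (fun y => Real.exp (-(y - b)^2/2)) q.2)
          + c2 * ((fun x => Real.exp (-(x - a)^2/2)) q.1
            * (fun y => (y - b) * Real.exp (-(y - b)^2/2)) q.2)) := by
      intro q
      simp only
      rw [show -((q.1 - a)^2 + (q.2 - b)^2)/2 = -(q.1 - a)^2/2 + -(q.2 - b)^2/2 by ring,
        Real.exp_add]
      ring
    rw [integral_congr_ae (Filter.Eventually.of_forall hsplit)]
    rw [Measure.volume_eq_prod]
    have hEE : Integrable (fun q : ℝ × ℝ =>
        (fun x => Real.exp (-(x - a)^2/2)) q.1 * (fun y => Real.exp (-(y - b)^2/2)) q.2)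
        ((volume : Measure ℝ).prod volume) := (int_exp1 a).mul_prod (int_exp1 b)
    have hME : Integrable (fun q : ℝ × ℝ =>
        (fun x => (x - a) * Real.exp (-(x - a)^2/2)) q.1
          * (fun y => Real.exp (-(y - b)^2/2)) q.2)
        ((volume : Measure ℝ).prod volume) := (int_mexp1 a).mul_prod (int_exp1 b)
    have hEM : Integrable (fun q : ℝ × ℝ =>
        (fun x => Real.exp (-(x - a)^2/2)) q.1
          * (fun y => (y - b) * Real.exp (-(y - b)^2/2)) q.2)
        ((volume : Measure ℝ).prod volume) := (int_exp1 a).mul_prod (int_mexp1 b)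
    have hBC : Integrable (fun q : ℝ × ℝ =>
        c1 * ((fun x => (x - a) * Real.exp (-(x - a)^2/2)) q.1
            * (fun y => Real.exp (-(y - b)^2/2)) q.2)
          + c2 * ((fun x => Real.exp (-(x - a)^2/2)) q.1
            * (fun y => (y - b) * Real.exp (-(y - b)^2/2)) q.2))
        ((volume : Measure ℝ).prod volume) := (hME.const_mul c1).add (hEM.const_mul c2)
    rw [integral_add (hEE.const_mul c0) hBC,
      integral_add (hME.const_mul c1) (hEM.const_mul c2),
      integral_const_mul, integral_const_mul, integral_const_mul,
      integral_prod_mul (fun x => Real.exp (-(x - a)^2/2)) (fun y => Real.exp (-(y - b)^2/2)),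
      integral_prod_mul (fun x => (x - a) * Real.exp (-(x - a)^2/2))
        (fun y => Real.exp (-(y - b)^2/2)),
      integral_prod_mul (fun x => Real.exp (-(x - a)^2/2))
        (fun y => (y - b) * Real.exp (-(y - b)^2/2)), ig1, ig1, ig2, ig2]
    rw [Real.mul_self_sqrt (by positivity : (0:ℝ) ≤ 2*π)]
    ring
  have h := (volume_preserving_finTwoArrow ℝ).integral_comp
      (MeasurableEquiv.finTwoArrow).measurableEmbedding
      (fun q : ℝ × ℝ => Real.exp (-((q.1 - a)^2 + (q.2 - b)^2)/2) *
        (c0 + c1 * (q.1 - a) + c2 * (q.2 - b)))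
  simp only [MeasurableEquiv.finTwoArrow_apply] at h
  rw [← key, ← h]

lemma cross3_add_smul (v d0 d1 : Fin 3 → ℝ) (x y : ℝ) (j : Fin 3) :
    cross3 v (fun k => x * d0 k + y * d1 k) j
      = x * cross3 v d0 j + y * cross3 v d1 j := by
  fin_cases j <;> simp [cross3] <;> ring

/-- the explicit first-order hydrodynamic equilibrium distribution `(g0, g⃗)`
satisfies the particle-density, flow and spin-vector moment constraints
`⟨g0⟩ = n0`, `⟨p⃗ g0⟩ = J⃗`, `⟨g⃗⟩ = n⃗` exactly. -/
theorem hydrodynamic_equilibrium_moments (ε γ : ℝ) (hε : 0 < ε) (hγ : 0 < γ)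
    (n0 : (Fin 2 → ℝ) → ℝ) (nv : (Fin 2 → ℝ) → Fin 3 → ℝ) (J1 J2 : (Fin 2 → ℝ) → ℝ)
    (hn0 : ContDiff ℝ (⊤ : ℕ∞) n0) (hnv : ContDiff ℝ (⊤ : ℕ∞) nv)
    (hJ1 : ContDiff ℝ (⊤ : ℕ∞) J1) (hJ2 : ContDiff ℝ (⊤ : ℕ∞) J2)
    (hbound : ∀ r, 0 < Real.sqrt (nv r 0 ^ 2 + nv r 1 ^ 2 + nv r 2 ^ 2) ∧
      Real.sqrt (nv r 0 ^ 2 + nv r 1 ^ 2 + nv r 2 ^ 2) < n0 r) :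
    -- |n⃗|, J⃗, u⃗ = J⃗/n0, p⃗ = (p1,p2,0)
    let nn : (Fin 2 → ℝ) → ℝ := fun r => Real.sqrt (nv r 0 ^ 2 + nv r 1 ^ 2 + nv r 2 ^ 2)
    let Jv : (Fin 2 → ℝ) → Fin 3 → ℝ := fun r => ![J1 r, J2 r, 0]
    let u : (Fin 2 → ℝ) → Fin 3 → ℝ := fun r j => Jv r j / n0 r
    let pvec : (Fin 2 → ℝ) → Fin 3 → ℝ := fun p => ![p 0, p 1, 0]
    let ω : (Fin 2 → ℝ) → ℝ := fun r =>
      1 / Real.log (Real.sqrt ((n0 r + nn r) / (n0 r - nn r)))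
    -- the matrix part of Z applied to (p⃗ − u⃗)
    let Z : (Fin 2 → ℝ) → (Fin 2 → ℝ) → Fin 3 → ℝ := fun r p j =>
      (∑ k : Fin 3,
        ((1 - nn r ^ 2 / n0 r ^ 2) * (nv r j * nv r k / nn r ^ 2)
          + ω r * (nn r / n0 r) *
            ((if j = k then 1 else 0) - nv r j * nv r k / nn r ^ 2)) *
          (pvec p k - u r k))
      + (ω r / (2 * γ)) * (1 - nn r / n0 r) *
          cross3 (fun k => nv r k / nn r)
            (fun k => ∑ s : Fin 2, (pvec p s.castSucc - u r s.castSucc) *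
              fderiv ℝ (fun r' => nv r' k / nn r') r (Pi.single s 1)) j
    let g0 : (Fin 2 → ℝ) → (Fin 2 → ℝ) → ℝ := fun r p =>
      n0 r / (2 * Real.pi) *
        Real.exp (-((p 0 - u r 0) ^ 2 + (p 1 - u r 1) ^ 2) / 2)
    let gv : (Fin 2 → ℝ) → (Fin 2 → ℝ) → Fin 3 → ℝ := fun r p j =>
      n0 r / (2 * Real.pi) *
        Real.exp (-((p 0 - u r 0) ^ 2 + (p 1 - u r 1) ^ 2) / 2) *
        (nv r j / n0 r - ε * γ * Z r p j)
    ∀ r : Fin 2 → ℝ,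
      (∫ p : Fin 2 → ℝ, g0 r p = n0 r) ∧
      (∀ k : Fin 3, ∫ p : Fin 2 → ℝ, pvec p k * g0 r p = Jv r k) ∧
      (∀ j : Fin 3, ∫ p : Fin 2 → ℝ, gv r p j = nv r j) := by
  intro nn Jv u pvec ω Z g0 gv r
  have hnn : 0 < nn r := (hbound r).1
  have hn0r : 0 < n0 r := lt_trans hnn (hbound r).2
  have hn0' : n0 r ≠ 0 := ne_of_gt hn0r
  have hp0 : ∀ p : Fin 2 → ℝ, pvec p 0 = p 0 := fun p => rfl
  have hp1 : ∀ p : Fin 2 → ℝ, pvec p 1 = p 1 := fun p => rfl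
  have hp2 : ∀ p : Fin 2 → ℝ, pvec p 2 = (0:ℝ) := fun p => rfl
  have hu2 : u r 2 = 0 := by
    show (![J1 r, J2 r, 0] : Fin 3 → ℝ) 2 / n0 r = 0
    norm_num
    exact Or.inl rfl
  have hu0 : u r 0 = J1 r / n0 r := rfl
  have hu1 : u r 1 = J2 r / n0 r := rfl
  have hgexp : ∀ p : Fin 2 → ℝ,
      -((p 0 - u r 0) ^ 2 + (p 1 - u r 1) ^ 2) / 2
        = -((p 0 - u r 0) ^ 2 + (p 1 - u r 1) ^ 2) / 2 := fun _ => rfl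
  refine ⟨?_, ?_, ?_⟩
  · have key : ∀ p : Fin 2 → ℝ, g0 r p
        = Real.exp (-((p 0 - u r 0) ^ 2 + (p 1 - u r 1) ^ 2) / 2)
          * (n0 r / (2 * Real.pi) + 0 * (p 0 - u r 0) + 0 * (p 1 - u r 1)) := by
      intro p; simp only [g0]; ring
    simp only [key]
    rw [gauss2d]
    field_simp
  · intro k
    fin_cases k
    · show ∫ p : Fin 2 → ℝ, pvec p 0 * g0 r p = Jv r 0
      have key : ∀ p : Fin 2 → ℝ, pvec p 0 * g0 r p
          = Real.exp (-((p 0 - u r 0) ^ 2 + (p 1 - u r 1) ^ 2) / 2)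
            * (n0 r / (2 * Real.pi) * u r 0
              + (n0 r / (2 * Real.pi)) * (p 0 - u r 0) + 0 * (p 1 - u r 1)) := by
        intro p; simp only [g0, hp0]; ring
      simp only [key]
      rw [gauss2d]
      show 2 * Real.pi * (n0 r / (2 * Real.pi) * u r 0) = Jv r 0
      rw [hu0, show Jv r 0 = J1 r from rfl]
      field_simp
    · show ∫ p : Fin 2 → ℝ, pvec p 1 * g0 r p = Jv r 1
      have key : ∀ p : Fin 2 → ℝ, pvec p 1 * g0 r p
          = Real.exp (-((p 0 - u r 0) ^ 2 + (p 1 - u r 1) ^ 2) / 2)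
            * (n0 r / (2 * Real.pi) * u r 1
              + 0 * (p 0 - u r 0) + (n0 r / (2 * Real.pi)) * (p 1 - u r 1)) := by
        intro p; simp only [g0, hp1]; ring
      simp only [key]
      rw [gauss2d]
      show 2 * Real.pi * (n0 r / (2 * Real.pi) * u r 1) = Jv r 1
      rw [hu1, show Jv r 1 = J2 r from rfl]
      field_simp
    · show ∫ p : Fin 2 → ℝ, pvec p 2 * g0 r p = Jv r 2
      have key : ∀ p : Fin 2 → ℝ, pvec p 2 * g0 r p = (0:ℝ) := by
        intro p; rw [hp2]; ring
      simp only [key]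
      rw [integral_zero]
      show (0:ℝ) = Jv r 2
      norm_num [Jv]
      rfl
  · intro j
    have key : ∀ p : Fin 2 → ℝ, gv r p j =
        Real.exp (-((p 0 - u r 0) ^ 2 + (p 1 - u r 1) ^ 2) / 2) *
          (n0 r / (2 * Real.pi) * (nv r j / n0 r)
           + (n0 r / (2 * Real.pi) * (-(ε * γ)) *
              (((1 - nn r ^ 2 / n0 r ^ 2) * (nv r j * nv r 0 / nn r ^ 2)
                + ω r * (nn r / n0 r) *
                  ((if j = 0 then (1:ℝ) else 0) - nv r j * nv r 0 / nn r ^ 2))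
               + ω r / (2 * γ) * (1 - nn r / n0 r) *
                  cross3 (fun k => nv r k / nn r)
                    (fun k => fderiv ℝ (fun r' => nv r' k / nn r') r
                      (Pi.single (0 : Fin 2) 1)) j))
             * (p 0 - u r 0)
           + (n0 r / (2 * Real.pi) * (-(ε * γ)) *
              (((1 - nn r ^ 2 / n0 r ^ 2) * (nv r j * nv r 1 / nn r ^ 2)
                + ω r * (nn r / n0 r) *
                  ((if j = 1 then (1:ℝ) else 0) - nv r j * nv r 1 / nn r ^ 2))
               + ω r / (2 * γ) * (1 - nn r / n0 r) *
                  cross3 (fun k => nv r k / nn r)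
                    (fun k => fderiv ℝ (fun r' => nv r' k / nn r') r
                      (Pi.single (1 : Fin 2) 1)) j))
             * (p 1 - u r 1)) := by
      intro p
      have hc : cross3 (fun k => nv r k / nn r)
          (fun k => ∑ s : Fin 2, (pvec p s.castSucc - u r s.castSucc) *
            fderiv ℝ (fun r' => nv r' k / nn r') r (Pi.single s 1)) j
          = (p 0 - u r 0) * cross3 (fun k => nv r k / nn r)
              (fun k => fderiv ℝ (fun r' => nv r' k / nn r') r (Pi.single (0 : Fin 2) 1)) j
            + (p 1 - u r 1) * cross3 (fun k => nv r k / nn r)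
              (fun k => fderiv ℝ (fun r' => nv r' k / nn r') r (Pi.single (1 : Fin 2) 1)) j := by
        have h2 : (fun k : Fin 3 => ∑ s : Fin 2, (pvec p s.castSucc - u r s.castSucc) *
            fderiv ℝ (fun r' => nv r' k / nn r') r (Pi.single s 1))
            = fun k : Fin 3 =>
              (p 0 - u r 0) * fderiv ℝ (fun r' => nv r' k / nn r') r (Pi.single (0 : Fin 2) 1)
              + (p 1 - u r 1) * fderiv ℝ (fun r' => nv r' k / nn r') r
                  (Pi.single (1 : Fin 2) 1) := by
          funext k
          rw [Fin.sum_univ_two]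
          simp only [Fin.castSucc_zero, Fin.castSucc_one, hp0, hp1]
        rw [h2]
        have h3 := cross3_add_smul (fun k => nv r k / nn r)
          (fun k => fderiv ℝ (fun r' => nv r' k / nn r') r (Pi.single (0 : Fin 2) 1))
          (fun k => fderiv ℝ (fun r' => nv r' k / nn r') r (Pi.single (1 : Fin 2) 1))
          (p 0 - u r 0) (p 1 - u r 1) j
        simpa using h3
      simp only [gv, Z, Fin.sum_univ_three, hp0, hp1, hp2, hu2, hc]
      ring
    simp only [key]
    rw [gauss2d]
    field_simp

end
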